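/- arXiv:1807.02082 — 3 statements merged into one kernel-verified Lean document; each statement's English description precedes it below -/
import Mathlib

section
/- Let I ⊂ S be a homogeneous Gorenstein ideal with A = S/I Artinian of socle degree ν, and let f_A be a Macaulay inverse system of A. Then f_A has a point of multiplicity ℓ+1 at some nonzero p ∈ C^n if and only if there exists a nonzero linear form L ∈ S_1 such that L^{ν−ℓ} ∈ I and L^{ν−ℓ−1} ∉ I. -/
open MvPolynomial

/-- The iterated differential operator `∏ᵢ (∂/∂zᵢ)^(s i)` as a linear endomorphism. -/
noncomputable def diffOp {n : ℕ} (s : Fin n →₀ ℕ) :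
    Module.End ℂ (MvPolynomial (Fin n) ℂ) :=
  (List.ofFn fun i : Fin n =>
    ((pderiv i : Derivation ℂ (MvPolynomial (Fin n) ℂ) (MvPolynomial (Fin n) ℂ)).toLinearMap
      ^ (s i) : Module.End ℂ (MvPolynomial (Fin n) ℂ))).prod

/-- Polar pairing: `g ∘ F := g(∂/∂z₁,…,∂/∂zₙ) F`. -/
noncomputable def polar {n : ℕ} (g F : MvPolynomial (Fin n) ℂ) : MvPolynomial (Fin n) ℂ :=
  ∑ s ∈ g.support, (coeff s g) • diffOp s F

/-!
For `p ∈ ℂⁿ` let `L_p = ∑ pᵢ xᵢ`. Euler's identity gives `L_p^d ∘ h = d! · h(p)` for every form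
`h` of degree `d`. Hence, for `u` of degree `m ≤ ν`, the form `L_p^(ν-m) ∘ f` of degree `m`
satisfies `u ∘ (L_p^(ν-m) ∘ f) = (ν-m)! · (u ∘ f)(p)`. The apolar pairing between forms of the
same degree is nondegenerate, so all order-`m` partials of `f` vanish at `p` iff
`L_p^(ν-m) ∘ f = 0`, that is iff `L_p^(ν-m) ∈ f^⊥ = I`. Apply this with `m = ℓ` and `m = ℓ + 1`.
-/

namespace MvPolynomial

variable {σ : Type*} [Fintype σ]

noncomputable def linearForm {R : Type*} [CommSemiring R] (p : σ → R) : MvPolynomial σ R :=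
  ∑ i, p i • X i

theorem isHomogeneous_linearForm {R : Type*} [CommSemiring R] (p : σ → R) :
    (linearForm p).IsHomogeneous 1 :=
  IsHomogeneous.sum _ _ _ fun i _ => by
    rw [smul_eq_C_mul]
    exact isHomogeneous_C_mul_X _ _

theorem linearForm_ne_zero {R : Type*} [CommRing R] {p : σ → R} (hp : p ≠ 0) :
    linearForm p ≠ 0 := fun h =>
  hp <| _root_.funext <| Fintype.linearIndependent_iff.mp (linearIndependent_X σ R) p h

end MvPolynomial

section DiffOp

variable {n : ℕ}

theorem pderiv_pow_monomial (i : Fin n) (k : ℕ) (t : Fin n →₀ ℕ) (a : ℂ) :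
    ((pderiv i : Derivation ℂ (MvPolynomial (Fin n) ℂ) (MvPolynomial (Fin n) ℂ)).toLinearMap ^ k :
        Module.End ℂ (MvPolynomial (Fin n) ℂ)) (monomial t a) =
      monomial (t - Finsupp.single i k) (a * (t i).descFactorial k) := by
  induction k with
  | zero => simp
  | succ k ih =>
    rw [pow_succ', Module.End.mul_apply, ih, Derivation.coeFn_coe, pderiv_monomial, tsub_tsub,
      ← Finsupp.single_add, Nat.descFactorial_succ, Finsupp.tsub_apply, Finsupp.single_eq_same,
      Nat.cast_mul]
    ring_nf

theorem list_prod_pderiv_pow_monomial (s t : Fin n →₀ ℕ) (a : ℂ) {L : List (Fin n)}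
    (hL : L.Nodup) :
    (L.map fun i =>
        ((pderiv i : Derivation ℂ (MvPolynomial (Fin n) ℂ) (MvPolynomial (Fin n) ℂ)).toLinearMap
          ^ s i : Module.End ℂ (MvPolynomial (Fin n) ℂ))).prod (monomial t a) =
      monomial (t - ∑ i ∈ L.toFinset, Finsupp.single i (s i))
        (a * ∏ i ∈ L.toFinset, ((t i).descFactorial (s i) : ℂ)) := by
  induction L with
  | nil => simp
  | cons i L ih =>
    obtain ⟨hi, hL⟩ := List.nodup_cons.mp hL
    have hi' : i ∉ L.toFinset := List.mem_toFinset.not.mpr hi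
    have hsum : (∑ j ∈ L.toFinset, Finsupp.single j (s j)) i = 0 := by
      simp [Finsupp.finsetSum_apply, Finsupp.single_apply, hi]
    rw [List.map_cons, List.prod_cons, Module.End.mul_apply, ih hL, pderiv_pow_monomial,
      List.toFinset_cons, Finset.sum_insert hi', Finset.prod_insert hi', tsub_tsub, add_comm,
      Finsupp.tsub_apply, hsum, tsub_zero]
    ring_nf

theorem diffOp_monomial (s t : Fin n →₀ ℕ) (a : ℂ) :
    diffOp s (monomial t a) = monomial (t - s) (a * ∏ i, ((t i).descFactorial (s i) : ℂ)) := by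
  rw [diffOp, List.ofFn_eq_map, list_prod_pderiv_pow_monomial s t a (List.nodup_finRange n),
    List.toFinset_finRange, Finsupp.univ_sum_single]

theorem diffOp_zero : diffOp (0 : Fin n →₀ ℕ) = 1 := by
  simp [diffOp]

theorem diffOp_single_one (i : Fin n) (F : MvPolynomial (Fin n) ℂ) :
    diffOp (Finsupp.single i 1) F = pderiv i F := by
  induction F using MvPolynomial.induction_on' with
  | monomial t a =>
    rw [diffOp_monomial, pderiv_monomial, Finset.prod_eq_single i (fun j _ hj => by
      simp [Ne.symm hj]) (by simp)]
    simp
  | add p q hp hq => rw [map_add, map_add, hp, hq]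

end DiffOp

section Polar

variable {n : ℕ}

theorem polar_eq_finsupp_sum (g F : MvPolynomial (Fin n) ℂ) :
    polar g F = (AddMonoidAlgebra.coeff g).sum fun s a => a • diffOp s F :=
  rfl

theorem polar_eq_sum_diffOp_apply (g F : MvPolynomial (Fin n) ℂ) :
    polar g F = (∑ s ∈ g.support, coeff s g • diffOp s) F := by
  simp [polar]

theorem polar_add_left (g h F : MvPolynomial (Fin n) ℂ) :
    polar (g + h) F = polar g F + polar h F := by
  simp only [polar_eq_finsupp_sum, AddMonoidAlgebra.coeff_add]
  exact Finsupp.sum_add_index' (by simp) fun _ _ _ => add_smul _ _ _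

theorem polar_sum_left {ι : Type*} (T : Finset ι) (G : ι → MvPolynomial (Fin n) ℂ)
    (F : MvPolynomial (Fin n) ℂ) : polar (∑ i ∈ T, G i) F = ∑ i ∈ T, polar (G i) F :=
  map_sum (AddMonoidHom.mk' (polar · F) fun g h => polar_add_left g h F) G T

theorem polar_zero_right (g : MvPolynomial (Fin n) ℂ) : polar g 0 = 0 := by
  rw [polar_eq_sum_diffOp_apply, map_zero]

theorem polar_add_right (g F G : MvPolynomial (Fin n) ℂ) :
    polar g (F + G) = polar g F + polar g G := by
  simp only [polar_eq_sum_diffOp_apply, map_add]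

theorem polar_sum_right {ι : Type*} (T : Finset ι) (g : MvPolynomial (Fin n) ℂ)
    (G : ι → MvPolynomial (Fin n) ℂ) : polar g (∑ i ∈ T, G i) = ∑ i ∈ T, polar g (G i) := by
  simp only [polar_eq_sum_diffOp_apply, map_sum]

theorem polar_monomial (s : Fin n →₀ ℕ) (a : ℂ) (F : MvPolynomial (Fin n) ℂ) :
    polar (monomial s a) F = a • diffOp s F := by
  rw [polar_eq_finsupp_sum]
  exact Finsupp.sum_single_index (zero_smul _ _)

theorem polar_monomial_monomial (s t : Fin n →₀ ℕ) (a b : ℂ) :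
    polar (monomial s a) (monomial t b) =
      monomial (t - s) (a * b * ∏ i, ((t i).descFactorial (s i) : ℂ)) := by
  rw [polar_monomial, diffOp_monomial, smul_monomial, smul_eq_mul, mul_assoc]

theorem prod_descFactorial_eq_zero_of_not_le {s t : Fin n →₀ ℕ} (h : ¬s ≤ t) :
    ∏ i, ((t i).descFactorial (s i) : ℂ) = 0 := by
  obtain ⟨i, hi⟩ : ∃ i, t i < s i := by simpa [Finsupp.le_def] using h
  exact Finset.prod_eq_zero (Finset.mem_univ i) (by simp [Nat.descFactorial_of_lt hi])

theorem polar_mul (g h F : MvPolynomial (Fin n) ℂ) :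
    polar (g * h) F = polar g (polar h F) := by
  induction g using MvPolynomial.induction_on' with
  | add g₁ g₂ h₁ h₂ => rw [add_mul, polar_add_left, polar_add_left, h₁, h₂]
  | monomial s a =>
  induction h using MvPolynomial.induction_on' with
  | add h₁ h₂ e₁ e₂ => rw [mul_add, polar_add_left, polar_add_left, e₁, e₂, polar_add_right]
  | monomial t b =>
  induction F using MvPolynomial.induction_on' with
  | add F₁ F₂ e₁ e₂ => rw [polar_add_right, polar_add_right, polar_add_right, e₁, e₂]
  | monomial u c =>
    have hdesc (i : Fin n) : (u i).descFactorial ((s + t) i) =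
        ((u - t) i).descFactorial (s i) * (u i).descFactorial (t i) := by
      simpa using (Nat.descFactorial_mul_descFactorial (Nat.le_add_left (t i) (s i))).symm
    rw [monomial_mul, polar_monomial_monomial, polar_monomial_monomial, polar_monomial_monomial,
      tsub_tsub, add_comm t s]
    simp only [hdesc, Nat.cast_mul, Finset.prod_mul_distrib]
    ring_nf

theorem polar_C (c : ℂ) (F : MvPolynomial (Fin n) ℂ) : polar (C c) F = c • F := by
  rw [← monomial_zero', polar_monomial, diffOp_zero, Module.End.one_apply]

theorem polar_smul_left (c : ℂ) (g F : MvPolynomial (Fin n) ℂ) :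
    polar (c • g) F = c • polar g F := by
  rw [smul_eq_C_mul, polar_mul, polar_C]

theorem polar_X (i : Fin n) (F : MvPolynomial (Fin n) ℂ) : polar (X i) F = pderiv i F := by
  rw [X, polar_monomial, diffOp_single_one, one_smul]

theorem isHomogeneous_polar_monomial_monomial (s t : Fin n →₀ ℕ) (a b : ℂ) :
    (polar (monomial s a) (monomial t b)).IsHomogeneous (t.degree - s.degree) := by
  rw [polar_monomial_monomial]
  by_cases hst : s ≤ t
  · refine isHomogeneous_monomial _ ?_
    have := congr(Finsupp.degree $(tsub_add_cancel_of_le hst))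
    rw [map_add] at this
    omega
  · rw [prod_descFactorial_eq_zero_of_not_le hst, mul_zero, monomial_zero]
    exact isHomogeneous_zero _ _ _

theorem isHomogeneous_polar {m ν : ℕ} {u F : MvPolynomial (Fin n) ℂ} (hu : u.IsHomogeneous m)
    (hF : F.IsHomogeneous ν) : (polar u F).IsHomogeneous (ν - m) := by
  rw [← support_sum_monomial_coeff u, ← support_sum_monomial_coeff F, polar_sum_left]
  refine IsHomogeneous.sum _ _ _ fun s hs => ?_
  rw [polar_sum_right]
  refine IsHomogeneous.sum _ _ _ fun t ht => ?_
  rw [hu.degree_eq_sum_deg_support hs, hF.degree_eq_sum_deg_support ht]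
  exact isHomogeneous_polar_monomial_monomial _ _ _ _

theorem coeff_zero_polar_monomial (d : Fin n →₀ ℕ) (h : MvPolynomial (Fin n) ℂ) :
    coeff 0 (polar (monomial d 1) h) = coeff d h * ∏ i, ((d i).factorial : ℂ) := by
  induction h using MvPolynomial.induction_on' with
  | add h₁ h₂ e₁ e₂ => rw [polar_add_right, coeff_add, coeff_add, e₁, e₂, add_mul]
  | monomial t b =>
    rw [polar_monomial_monomial, coeff_monomial, coeff_monomial]
    by_cases htd : t = d
    · subst htd
      simp [Nat.descFactorial_self]
    rw [if_neg htd, zero_mul]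
    by_cases hdt : d ≤ t
    · rw [if_neg fun h => htd (le_antisymm (tsub_eq_zero_iff_le.mp h) hdt)]
    · rw [prod_descFactorial_eq_zero_of_not_le hdt, mul_zero, ite_self]

end Polar

section Apolarity

variable {n : ℕ}

theorem eq_zero_iff_forall_polar_eq_zero {m : ℕ} {h : MvPolynomial (Fin n) ℂ}
    (hh : h.IsHomogeneous m) :
    h = 0 ↔ ∀ u : MvPolynomial (Fin n) ℂ, u.IsHomogeneous m → polar u h = 0 := by
  refine ⟨fun h0 _ _ => by rw [h0, polar_zero_right], fun H => ?_⟩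
  ext d
  rw [coeff_zero]
  by_cases hd : d.degree = m
  · have hfact : ∏ i, ((d i).factorial : ℂ) ≠ 0 :=
      Finset.prod_ne_zero_iff.mpr fun i _ => Nat.cast_ne_zero.mpr (Nat.factorial_ne_zero _)
    have := congr(coeff 0 $(H (monomial d 1) (isHomogeneous_monomial 1 hd)))
    rw [coeff_zero_polar_monomial, coeff_zero] at this
    exact (mul_eq_zero.mp this).resolve_right hfact
  · exact hh.coeff_eq_zero hd

theorem polar_linearForm (p : Fin n → ℂ) (F : MvPolynomial (Fin n) ℂ) :
    polar (linearForm p) F = ∑ i, p i • pderiv i F := by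
  simp only [linearForm, polar_sum_left, polar_smul_left, polar_X]

theorem eval_polar_linearForm {d : ℕ} {h : MvPolynomial (Fin n) ℂ} (hh : h.IsHomogeneous d)
    (p : Fin n → ℂ) : eval p (polar (linearForm p) h) = d * eval p h := by
  simpa [polar_linearForm] using congr(eval p $(hh.sum_X_mul_pderiv))

theorem polar_linearForm_pow (p : Fin n → ℂ) (d : ℕ) {h : MvPolynomial (Fin n) ℂ}
    (hh : h.IsHomogeneous d) : polar (linearForm p ^ d) h = C (d.factorial * eval p h) := by
  induction d generalizing h with
  | zero =>
    rw [totalDegree_eq_zero_iff_eq_C.mp ((totalDegree_zero_iff_isHomogeneous _).mpr hh), pow_zero,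
      ← C_1, polar_C, one_smul, eval_C, Nat.factorial_zero, Nat.cast_one, one_mul]
  | succ d ih =>
    have hLh : (polar (linearForm p) h).IsHomogeneous d := by
      simpa using isHomogeneous_polar (isHomogeneous_linearForm p) hh
    rw [pow_succ, polar_mul, ih hLh, eval_polar_linearForm hh, Nat.factorial_succ]
    push_cast
    ring_nf

theorem polar_polar_linearForm_pow {m ν : ℕ} {u f : MvPolynomial (Fin n) ℂ}
    (hu : u.IsHomogeneous m) (hf : f.IsHomogeneous ν) (p : Fin n → ℂ) :
    polar u (polar (linearForm p ^ (ν - m)) f) = C ((ν - m).factorial * eval p (polar u f)) := by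
  rw [← polar_mul, mul_comm, polar_mul, polar_linearForm_pow p _ (isHomogeneous_polar hu hf)]

theorem forall_eval_polar_eq_zero_iff {m ν : ℕ} {f : MvPolynomial (Fin n) ℂ}
    (hf : f.IsHomogeneous ν) (hm : m ≤ ν) (p : Fin n → ℂ) :
    (∀ u : MvPolynomial (Fin n) ℂ, u.IsHomogeneous m → eval p (polar u f) = 0) ↔
      polar (linearForm p ^ (ν - m)) f = 0 := by
  have hh : (polar (linearForm p ^ (ν - m)) f).IsHomogeneous m := by
    simpa [Nat.sub_sub_self hm] using
      isHomogeneous_polar ((isHomogeneous_linearForm p).pow (ν - m)) hf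
  rw [eq_zero_iff_forall_polar_eq_zero hh]
  refine forall₂_congr fun u hu => ?_
  rw [polar_polar_linearForm_pow hu hf, C_eq_zero, mul_eq_zero,
    or_iff_right (Nat.cast_ne_zero.mpr (Nat.factorial_ne_zero _))]

end Apolarity

theorem multiplicity_iff_power_of_linear_form_general {n ν ℓ : ℕ}
    (I : Ideal (MvPolynomial (Fin n) ℂ))
    (f : MvPolynomial (Fin n) ℂ) (hf : f.IsHomogeneous ν)
    (hperp : ∀ g : MvPolynomial (Fin n) ℂ, polar g f = 0 ↔ g ∈ I)
    (hℓ : ℓ + 1 ≤ ν) :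
    (∃ p : Fin n → ℂ, p ≠ 0 ∧
        (∀ u : MvPolynomial (Fin n) ℂ, u.IsHomogeneous ℓ → eval p (polar u f) = 0) ∧
        (∃ u : MvPolynomial (Fin n) ℂ, u.IsHomogeneous (ℓ + 1) ∧ eval p (polar u f) ≠ 0)) ↔
      (∃ c : Fin n → ℂ, (∑ i, c i • X i : MvPolynomial (Fin n) ℂ) ≠ 0 ∧
        (∑ i, c i • X i : MvPolynomial (Fin n) ℂ) ^ (ν - ℓ) ∈ I ∧
        (∑ i, c i • X i : MvPolynomial (Fin n) ℂ) ^ (ν - ℓ - 1) ∉ I) := by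
  have vanish_iff_mem (p : Fin n → ℂ) {m : ℕ} (hm : m ≤ ν) :
      (∀ u : MvPolynomial (Fin n) ℂ, u.IsHomogeneous m → eval p (polar u f) = 0) ↔
        linearForm p ^ (ν - m) ∈ I :=
    (forall_eval_polar_eq_zero_iff hf hm p).trans (hperp _)
  rw [Nat.sub_sub]
  constructor
  · rintro ⟨p, hp, hvanish, u, hu, hne⟩
    exact ⟨p, linearForm_ne_zero hp, (vanish_iff_mem p (by omega)).mp hvanish,
      fun hmem => hne ((vanish_iff_mem p hℓ).mpr hmem u hu)⟩
  · rintro ⟨c, hc, hmem, hnmem⟩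
    refine ⟨c, fun hc0 => hc (by simp [hc0]), (vanish_iff_mem c (by omega)).mpr hmem, ?_⟩
    by_contra! hvanish
    exact hnmem ((vanish_iff_mem c hℓ).mp hvanish)

/-- A Macaulay inverse system `f` of `A = S/I` (Artinian Gorenstein
of socle degree `ν`) has a point of multiplicity `ℓ+1` iff there is a nonzero linear
form `L` with `L^{ν-ℓ} ∈ I` and `L^{ν-ℓ-1} ∉ I`. -/
theorem multiplicity_iff_power_of_linear_form {n ν ℓ : ℕ}
    (I : Ideal (MvPolynomial (Fin n) ℂ))
    (hIhom : ∀ g ∈ I, ∀ k : ℕ, (homogeneousComponent k g : MvPolynomial (Fin n) ℂ) ∈ I)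
    (hArt : IsArtinianRing (MvPolynomial (Fin n) ℂ ⧸ I))
    (f : MvPolynomial (Fin n) ℂ) (hf : f.IsHomogeneous ν)
    (hperp : ∀ g : MvPolynomial (Fin n) ℂ, polar g f = 0 ↔ g ∈ I)
    (hℓ : ℓ + 1 ≤ ν) :
    (∃ p : Fin n → ℂ, p ≠ 0 ∧
        (∀ u : MvPolynomial (Fin n) ℂ, u.IsHomogeneous ℓ → eval p (polar u f) = 0) ∧
        (∃ u : MvPolynomial (Fin n) ℂ, u.IsHomogeneous (ℓ + 1) ∧ eval p (polar u f) ≠ 0)) ↔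
      (∃ c : Fin n → ℂ, (∑ i, c i • X i : MvPolynomial (Fin n) ℂ) ≠ 0 ∧
        (∑ i, c i • X i : MvPolynomial (Fin n) ℂ) ^ (ν - ℓ) ∈ I ∧
        (∑ i, c i • X i : MvPolynomial (Fin n) ℂ) ^ (ν - ℓ - 1) ∉ I) :=
  multiplicity_iff_power_of_linear_form_general I f hf hperp hℓ
end

section
/- Let I ⊂ S be a homogeneous Gorenstein ideal with A = S/I Artinian of socle degree ν, and f_A a Macaulay inverse system of A. Then the hypersurface defined by f_A has no points of multiplicity ≥ ℓ+1 if and only if I_{ν−ℓ} contains no nonzero (ν−ℓ)-th power of a linear form, i.e., I_{ν−ℓ} ∩ C_{ν−ℓ} = {0}, where C_m := {L^m : L ∈ S_1}. -/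
open MvPolynomial

/-!
Evaluating a polynomial `g` at the partial derivatives gives an algebra map `g ↦ g(∂)` into
the commutative algebra generated by the `∂ᵢ`, so `(g h)(∂) F = g(∂) (h(∂) F) = h(∂) (g(∂) F)`.
For `F` homogeneous of degree `m` and `L_c = ∑ cᵢ xᵢ`, Euler's identity gives
`L_c^m(∂) F = m! F(c)`. Put `m = ν - ℓ`. If `L_c^m ∈ I = f^⊥`, then for every `u` of degree `ℓ`,
`m! (u(∂) f)(c) = u(∂) (L_c^m(∂) f) = 0`, so `c` is a point of multiplicity `> ℓ`.
Conversely, if all `ℓ`-th derivatives of `f` vanish at `p`, then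
`L_c^ℓ(∂) (L_p^m(∂) f) = m! (L_c^ℓ(∂) f)(p) = 0` for every `c`, so the form `L_p^m(∂) f` of
degree `ℓ` vanishes everywhere and `L_p^m ∈ I`.
-/

namespace MvPolynomial

variable {R σ : Type*} [CommRing R]

theorem pderiv_pderiv_comm (i j : σ) (φ : MvPolynomial σ R) :
    pderiv i (pderiv j φ) = pderiv j (pderiv i φ) := by
  -- the commutator of two derivations is a derivation, and this one kills every variable
  have : ⁅pderiv i, pderiv j⁆ = (0 : Derivation R (MvPolynomial σ R) (MvPolynomial σ R)) :=
    derivation_ext fun k => by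
      classical
      rw [Derivation.commutator_apply]
      simp [pderiv_X, Pi.single_apply, apply_ite]
  have := congr($this φ)
  rwa [Derivation.commutator_apply, Derivation.zero_apply, sub_eq_zero] at this

variable (R σ) in
/-- `aeval` needs a commutative target, so `g(∂)` is first evaluated in this subalgebra. -/
noncomputable abbrev pderivAlgebra : Subalgebra R (Module.End R (MvPolynomial σ R)) :=
  Algebra.adjoin R (Set.range fun i : σ => (pderiv i : Derivation R _ _).toLinearMap)

instance : IsMulCommutative (pderivAlgebra R σ) :=
  Algebra.isMulCommutative_adjoin R <| by
    rintro _ ⟨i, rfl⟩ _ ⟨j, rfl⟩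
    exact LinearMap.ext fun φ => pderiv_pderiv_comm i j φ

open scoped IsMulCommutative in
noncomputable def evalPDeriv : MvPolynomial σ R →ₐ[R] Module.End R (MvPolynomial σ R) :=
  (pderivAlgebra R σ).val.comp (aeval fun i => ⟨_, Algebra.subset_adjoin ⟨i, rfl⟩⟩)

@[simp]
theorem evalPDeriv_X (i : σ) :
    evalPDeriv (X i : MvPolynomial σ R) = (pderiv i : Derivation R _ _).toLinearMap := by
  simp [evalPDeriv]

theorem evalPDeriv_comm (g h F : MvPolynomial σ R) :
    evalPDeriv g (evalPDeriv h F) = evalPDeriv h (evalPDeriv g F) := by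
  rw [← Module.End.mul_apply, ← map_mul, mul_comm, map_mul, Module.End.mul_apply]

theorem IsHomogeneous.pderiv_pow {F : MvPolynomial σ R} {d : ℕ} (hF : F.IsHomogeneous d)
    (i : σ) (k : ℕ) :
    (((pderiv i : Derivation R _ _).toLinearMap ^ k) F).IsHomogeneous (d - k) := by
  induction k with
  | zero => simpa using hF
  | succ k ih =>
    rw [pow_succ', Module.End.mul_apply, ← tsub_tsub]
    exact ih.pderiv

theorem IsHomogeneous.evalPDeriv_monomial {F : MvPolynomial σ R} {d : ℕ}
    (hF : F.IsHomogeneous d) (s : σ →₀ ℕ) (a : R) :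
    (evalPDeriv (monomial s a) F).IsHomogeneous (d - s.degree) := by
  induction s using Finsupp.induction with
  | zero =>
    rw [monomial_zero', ← algebraMap_eq, AlgHom.commutes, Module.algebraMap_end_apply, map_zero,
      Nat.sub_zero]
    exact (homogeneousSubmodule σ R d).smul_mem a hF
  | single_add i k s _ _ ih =>
    rw [monomial_single_add, map_mul, map_pow, evalPDeriv_X, Module.End.mul_apply, map_add,
      Finsupp.degree_single, add_comm, ← tsub_tsub]
    exact ih.pderiv_pow i k

theorem IsHomogeneous.evalPDeriv {u F : MvPolynomial σ R} {e d : ℕ}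
    (hF : F.IsHomogeneous d) (hu : u.IsHomogeneous e) :
    (evalPDeriv u F).IsHomogeneous (d - e) := by
  rw [u.as_sum, map_sum, LinearMap.sum_apply]
  refine IsHomogeneous.sum _ _ _ fun s hs => ?_
  have hs : s.degree = e := by
    rw [Finsupp.degree_eq_weight_one]
    exact hu (mem_support_iff.mp hs)
  exact hs ▸ hF.evalPDeriv_monomial s _

variable [Fintype σ]

theorem isHomogeneous_linearForm_s6 (c : σ → R) :
    (∑ i, c i • X i : MvPolynomial σ R).IsHomogeneous 1 :=
  IsHomogeneous.sum _ _ _ fun i _ => by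
    rw [smul_eq_C_mul]
    exact isHomogeneous_C_mul_X _ _

theorem isHomogeneous_linearForm_pow (c : σ → R) (m : ℕ) :
    ((∑ i, c i • X i : MvPolynomial σ R) ^ m).IsHomogeneous m := by
  simpa using (isHomogeneous_linearForm_s6 c).pow m

theorem linearForm_eq_zero_iff (c : σ → R) :
    (∑ i, c i • X i : MvPolynomial σ R) = 0 ↔ c = 0 :=
  ⟨fun h => _root_.funext (Fintype.linearIndependent_iff.mp (linearIndependent_X _ _) c h),
    by rintro rfl; simp⟩

theorem evalPDeriv_linearForm (c : σ → R) (F : MvPolynomial σ R) :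
    evalPDeriv (∑ i, c i • X i) F = ∑ i, c i • pderiv i F := by
  simp [LinearMap.sum_apply]

theorem eval_evalPDeriv_linearForm {F : MvPolynomial σ R} {m : ℕ}
    (hF : F.IsHomogeneous m) (c : σ → R) :
    eval c (evalPDeriv (∑ i, c i • X i) F) = m * eval c F := by
  have euler := congr(eval c $(hF.sum_X_mul_pderiv))
  simpa [evalPDeriv_linearForm] using euler

theorem evalPDeriv_linearForm_pow {F : MvPolynomial σ R} {m : ℕ}
    (hF : F.IsHomogeneous m) (c : σ → R) :
    evalPDeriv ((∑ i, c i • X i) ^ m) F = C (m.factorial * eval c F) := by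
  induction m generalizing F with
  | zero =>
    have hF := totalDegree_eq_zero_iff_eq_C.mp ((totalDegree_zero_iff_isHomogeneous σ).mpr hF)
    rw [hF]
    simp
  | succ m ih =>
    have hLF : (evalPDeriv (∑ i, c i • X i) F).IsHomogeneous m :=
      hF.evalPDeriv (isHomogeneous_linearForm_s6 c)
    rw [pow_succ, map_mul, Module.End.mul_apply, ih hLF, eval_evalPDeriv_linearForm hF,
      Nat.factorial_succ]
    congr 1
    push_cast
    ring

variable [CharZero R]

theorem eval_eq_zero_of_evalPDeriv_linearForm_pow_eq_zero [NoZeroDivisors R]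
    {F : MvPolynomial σ R} {m : ℕ} (hF : F.IsHomogeneous m) {c : σ → R}
    (h : evalPDeriv ((∑ i, c i • X i) ^ m) F = 0) :
    eval c F = 0 := by
  rw [evalPDeriv_linearForm_pow hF, C_eq_zero, mul_eq_zero] at h
  exact h.resolve_left (Nat.cast_ne_zero.mpr m.factorial_ne_zero)

theorem eq_zero_of_forall_evalPDeriv_linearForm_pow_eq_zero [IsDomain R]
    {F : MvPolynomial σ R} {m : ℕ} (hF : F.IsHomogeneous m)
    (h : ∀ c : σ → R, evalPDeriv ((∑ i, c i • X i) ^ m) F = 0) :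
    F = 0 :=
  MvPolynomial.funext fun c => by
    rw [eval_eq_zero_of_evalPDeriv_linearForm_pow_eq_zero hF (h c), map_zero]

end MvPolynomial

theorem diffOp_eq_evalPDeriv_monomial {n : ℕ} (s : Fin n →₀ ℕ) :
    diffOp s = evalPDeriv (monomial s (1 : ℂ)) := by
  rw [diffOp, monomial_eq, C_1, one_mul, Finsupp.prod_fintype _ _ fun i => pow_zero _,
    ← List.prod_ofFn, map_list_prod, List.map_ofFn]
  simp [Function.comp_def]

theorem polar_eq_evalPDeriv {n : ℕ} (g F : MvPolynomial (Fin n) ℂ) :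
    polar g F = evalPDeriv g F := by
  rw [polar]
  conv_rhs => rw [g.as_sum]
  rw [map_sum, LinearMap.sum_apply]
  refine Finset.sum_congr rfl fun s _ => ?_
  rw [diffOp_eq_evalPDeriv_monomial, ← LinearMap.smul_apply, ← map_smul, smul_monomial,
    smul_eq_mul, mul_one]

theorem no_multiplicity_iff_veronese_general {n ν ℓ : ℕ}
    (I : Ideal (MvPolynomial (Fin n) ℂ))
    (f : MvPolynomial (Fin n) ℂ) (hf : f.IsHomogeneous ν)
    (hperp : ∀ g : MvPolynomial (Fin n) ℂ, polar g f = 0 ↔ g ∈ I)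
    (hℓ : ℓ < ν) :
    (∀ p : Fin n → ℂ, p ≠ 0 →
        ∃ u : MvPolynomial (Fin n) ℂ, u.IsHomogeneous ℓ ∧ eval p (polar u f) ≠ 0) ↔
      (∀ c : Fin n → ℂ,
        (∑ i, c i • X i : MvPolynomial (Fin n) ℂ) ^ (ν - ℓ) ∈ I →
        (∑ i, c i • X i : MvPolynomial (Fin n) ℂ) = 0) := by
  simp only [polar_eq_evalPDeriv] at hperp ⊢
  constructor
  · intro hsmooth c hc
    by_contra hL
    obtain ⟨u, hu, hne⟩ := hsmooth c (mt (linearForm_eq_zero_iff c).2 hL)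
    refine hne (eval_eq_zero_of_evalPDeriv_linearForm_pow_eq_zero (hf.evalPDeriv hu) ?_)
    rw [evalPDeriv_comm, (hperp _).2 hc, map_zero]
  · intro hveronese p hp
    by_contra! hsing
    have hdeg : ν - (ν - ℓ) = ℓ := by omega
    refine hp <| (linearForm_eq_zero_iff p).1 <| hveronese p <| (hperp _).1 <|
      eq_zero_of_forall_evalPDeriv_linearForm_pow_eq_zero
        (hdeg ▸ hf.evalPDeriv (isHomogeneous_linearForm_pow p (ν - ℓ))) fun c => ?_
    have hcf := hf.evalPDeriv (isHomogeneous_linearForm_pow c ℓ)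
    rw [evalPDeriv_comm, evalPDeriv_linearForm_pow hcf,
      hsing _ (isHomogeneous_linearForm_pow c ℓ), mul_zero, map_zero]

/-- The hypersurface defined by a Macaulay inverse system `f` of
`A = S/I` has no points of multiplicity `≥ ℓ+1` iff `I_{ν-ℓ}` contains no nonzero
`(ν-ℓ)`-th power of a linear form, i.e. `I_{ν-ℓ} ∩ C_{ν-ℓ} = {0}`. -/
theorem no_multiplicity_iff_veronese {n ν ℓ : ℕ}
    (I : Ideal (MvPolynomial (Fin n) ℂ))
    (hIhom : ∀ g ∈ I, ∀ k : ℕ, (homogeneousComponent k g : MvPolynomial (Fin n) ℂ) ∈ I)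
    (hArt : IsArtinianRing (MvPolynomial (Fin n) ℂ ⧸ I))
    (f : MvPolynomial (Fin n) ℂ) (hf : f.IsHomogeneous ν)
    (hperp : ∀ g : MvPolynomial (Fin n) ℂ, polar g f = 0 ↔ g ∈ I)
    (hℓ : ℓ < ν) :
    (∀ p : Fin n → ℂ, p ≠ 0 →
        ∃ u : MvPolynomial (Fin n) ℂ, u.IsHomogeneous ℓ ∧ eval p (polar u f) ≠ 0) ↔
      (∀ c : Fin n → ℂ,
        (∑ i, c i • X i : MvPolynomial (Fin n) ℂ) ^ (ν - ℓ) ∈ I →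
        (∑ i, c i • X i : MvPolynomial (Fin n) ℂ) = 0) :=
  no_multiplicity_iff_veronese_general I f hf hperp hℓ
end

section
/- Suppose f is a homogeneous form of degree d+1 in C[x_1,...,x_n] and λ is a nontrivial diagonal one-parameter subgroup of SL(n) with integer weights λ_1 ≤ ... ≤ λ_n summing to zero, such that for every i the λ-weight of the initial monomial of ∂f/∂x_i equals d·λ_i. Then f is a direct sum: after the identity change of coordinates there is 1 ≤ a < n with f = g_1(x_1,...,x_a) + g_2(x_{a+1},...,x_n). -/
/-!
Let `M = λₙ` be the largest weight. If a monomial `s` of `f` contains a variable `xᵢ` of weight `M`,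
then `s - eᵢ` is a monomial of `∂f/∂xᵢ` of degree `d`, so its weight is at most `d·M`; the
hypothesis forces equality, so every variable of `s` has weight `M`. Thus each monomial of `f` lives
either in the variables of weight `M` or in the others. Both kinds occur: every `∂f/∂xᵢ` is
nonzero, so every variable occurs in `f`, and since `∑ λᵢ = 0 ≠ λ` not all weights equal `M`.
-/

open MvPolynomial Finset

theorem eq_of_sum_mul_le_sum_mul {ι : Type*} [Fintype ι] {t : ι → ℕ} {lam : ι → ℤ} {M : ℤ}
    (hM : ∀ j, lam j ≤ M) (h : (∑ j, (t j : ℤ)) * M ≤ ∑ j, (t j : ℤ) * lam j) {j : ι}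
    (hj : t j ≠ 0) : lam j = M := by
  have hnonneg : ∀ k ∈ univ, 0 ≤ (t k : ℤ) * (M - lam k) :=
    fun k _ => mul_nonneg (Int.natCast_nonneg _) (sub_nonneg.2 (hM k))
  have hsum : ∑ k, (t k : ℤ) * (M - lam k) = 0 := by
    refine le_antisymm ?_ (sum_nonneg hnonneg)
    simp only [mul_sub, sum_sub_distrib, ← sum_mul]
    linarith
  rcases mul_eq_zero.1 ((sum_eq_zero_iff_of_nonneg hnonneg).1 hsum j (mem_univ j)) with h | h
  · exact absurd (by exact_mod_cast h) hj
  · linarith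

theorem exists_lt_of_sum_eq_zero {ι α : Type*} [Fintype ι] [AddCommGroup α] [LinearOrder α]
    [IsOrderedAddMonoid α] {lam : ι → α} (hsum : ∑ i, lam i = 0) (hne : lam ≠ 0) {k : ι}
    (hk : ∀ i, lam i ≤ lam k) : ∃ i, lam i < lam k := by
  by_contra! h
  have hconst : ∀ i, lam i = lam k := fun i => le_antisymm (hk i) (h i)
  have hk0 : lam k = 0 := by
    have : Nonempty ι := ⟨k⟩
    simpa [hconst, Fintype.card_ne_zero] using hsum
  exact hne (funext fun i => (hconst i).trans hk0)

theorem Monotone.exists_lt_iff_lt {α : Type*} [Preorder α] {n : ℕ} {lam : Fin n → α}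
    (hmono : Monotone lam) (c : α) : ∃ a : ℕ, ∀ j : Fin n, (j : ℕ) < a ↔ lam j < c := by
  classical
  refine ⟨#{j | lam j < c}, fun j => ⟨fun hj => ?_, fun hj => ?_⟩⟩
  · by_contra hjc
    have hsub : ({k | lam k < c} : Finset (Fin n)) ⊆ Iio j := fun k hk => by
      simp only [mem_filter, mem_univ, true_and, mem_Iio] at hk ⊢
      exact lt_of_not_ge fun hjk => hjc ((hmono hjk).trans_lt hk)
    have := card_le_card hsub
    rw [Fin.card_Iio] at this
    omega
  · have hsub : Iic j ⊆ ({k | lam k < c} : Finset (Fin n)) := fun k hk => by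
      simp only [mem_filter, mem_univ, true_and, mem_Iic] at hk ⊢
      exact (hmono hk).trans_lt hj
    have := card_le_card hsub
    rw [Fin.card_Iic] at this
    omega

namespace MvPolynomial
variable {σ R : Type*} [CommSemiring R]

theorem support_sum_monomial_coeff_filter (f : MvPolynomial σ R) (P : (σ →₀ ℕ) → Prop)
    [DecidablePred P] :
    (∑ s ∈ f.support with P s, monomial s (coeff s f)).support = {s ∈ f.support | P s} := by
  classical
  ext t
  simp only [mem_support_iff, coeff_sum, coeff_monomial, sum_ite_eq', mem_filter]
  split_ifs with h <;> simp_all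

theorem exists_eq_add_of_exists_mem_support (f : MvPolynomial σ R) (P : (σ →₀ ℕ) → Prop)
    (h₁ : ∃ s ∈ f.support, ¬P s) (h₂ : ∃ s ∈ f.support, P s) :
    ∃ g₁ g₂ : MvPolynomial σ R, g₁ ≠ 0 ∧ g₂ ≠ 0 ∧ f = g₁ + g₂ ∧
      (∀ s ∈ g₁.support, s ∈ f.support ∧ ¬P s) ∧ ∀ s ∈ g₂.support, P s := by
  classical
  refine ⟨∑ s ∈ f.support with ¬P s, monomial s (coeff s f),
    ∑ s ∈ f.support with P s, monomial s (coeff s f), ?_, ?_, ?_, ?_, ?_⟩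
  · simpa [← support_eq_empty, support_sum_monomial_coeff_filter, ← not_nonempty_iff_eq_empty,
      filter_nonempty_iff] using h₁
  · simpa [← support_eq_empty, support_sum_monomial_coeff_filter, ← not_nonempty_iff_eq_empty,
      filter_nonempty_iff] using h₂
  · rw [sum_filter_not_add_sum_filter, support_sum_monomial_coeff]
  · simp [support_sum_monomial_coeff_filter]
  · simp [support_sum_monomial_coeff_filter]

theorem mem_support_pderiv_iff [CharZero R] [NoZeroDivisors R] {f : MvPolynomial σ R} {i : σ}
    {t : σ →₀ ℕ} : t ∈ (pderiv i f).support ↔ t + Finsupp.single i 1 ∈ f.support := by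
  simp [mem_support_iff, coeff_pderiv, Nat.cast_add_one_ne_zero]

theorem mem_vars_of_pderiv_ne_zero {f : MvPolynomial σ R} {i : σ} (h : pderiv i f ≠ 0) :
    i ∈ f.vars :=
  not_imp_comm.1 pderiv_eq_zero_of_notMem_vars h

theorem IsHomogeneous.eq_of_mem_support_of_le_weight_pderiv [Fintype σ] [CharZero R]
    [NoZeroDivisors R] {f : MvPolynomial σ R} {d : ℕ} (hf : f.IsHomogeneous (d + 1))
    {lam : σ → ℤ} {i : σ} (hmax : ∀ j, lam j ≤ lam i)
    (hlow : ∀ t ∈ (pderiv i f).support, (d : ℤ) * lam i ≤ ∑ j, (t j : ℤ) * lam j)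
    {s : σ →₀ ℕ} (hs : s ∈ f.support) (hsi : s i ≠ 0) {j : σ} (hsj : s j ≠ 0) :
    lam j = lam i := by
  obtain ⟨t, rfl⟩ : ∃ t, s = t + Finsupp.single i 1 :=
    ⟨s - Finsupp.single i 1,
      (tsub_add_cancel_of_le (Finsupp.single_le_iff.2 (Nat.one_le_iff_ne_zero.2 hsi))).symm⟩
  have hdeg : ∑ k, (t k : ℤ) = d := by
    have := hf.degree_eq_sum_deg_support hs
    rw [← Finsupp.degree_apply, map_add, Finsupp.degree_single, Finsupp.degree_eq_sum] at this
    exact_mod_cast (Nat.add_right_cancel this).symm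
  by_cases hji : j = i
  · rw [hji]
  refine eq_of_sum_mul_le_sum_mul hmax ?_ (t := fun k => t k) ?_
  · rw [hdeg]
    exact hlow t (mem_support_pderiv_iff.2 hs)
  · simpa [Finsupp.single_apply, Ne.symm hji] using hsj

end MvPolynomial

/-- Lemma on destabilizing one-parameter subgroups and direct sums.
If `λ` is a nontrivial diagonal 1-PS of `SL(n)` with integer weights `λ₁ ≤ ⋯ ≤ λₙ`
summing to zero such that for every `i` the `λ`-weight of the initial monomial of
`∂f/∂xᵢ` equals `d·λᵢ`, then `f` is a direct sum. -/
theorem direct_sum_of_initial_weights {n d : ℕ} (lam : Fin n → ℤ)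
    (f : MvPolynomial (Fin n) ℂ) (hf : f.IsHomogeneous (d + 1))
    (hmono : Monotone lam) (hsum : ∑ i, lam i = 0) (hnontriv : lam ≠ 0)
    (hinit : ∀ i : Fin n,
      IsLeast {w : ℤ | ∃ s ∈ (pderiv i f).support, w = ∑ j, (s j : ℤ) * lam j}
        ((d : ℤ) * lam i)) :
    ∃ a : ℕ, 0 < a ∧ a < n ∧
      ∃ g₁ g₂ : MvPolynomial (Fin n) ℂ, g₁ ≠ 0 ∧ g₂ ≠ 0 ∧ f = g₁ + g₂ ∧
        (∀ s ∈ g₁.support, ∀ j : Fin n, a ≤ (j : ℕ) → s j = 0) ∧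
        (∀ s ∈ g₂.support, ∀ j : Fin n, (j : ℕ) < a → s j = 0) := by
  obtain ⟨m, rfl⟩ : ∃ m, n = m + 1 :=
    Nat.exists_eq_succ_of_ne_zero fun h => hnontriv (by subst h; exact Subsingleton.elim _ _)
  set M := lam (Fin.last m)
  have hmax (j : Fin (m + 1)) : lam j ≤ M := hmono (Fin.le_last j)
  have hpure {s} (hs : s ∈ f.support) {i j} (hi : lam i = M) (hsi : s i ≠ 0) (hsj : s j ≠ 0) :
      lam j = M :=
    hi ▸ hf.eq_of_mem_support_of_le_weight_pderiv (hi ▸ hmax)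
      (fun t ht => (hinit i).2 ⟨t, ht, rfl⟩) hs hsi hsj
  have hvar (i) : ∃ s ∈ f.support, s i ≠ 0 := by
    obtain ⟨t, ht, -⟩ := (hinit i).1
    have hne : pderiv i f ≠ 0 := by rintro h; simp [h] at ht
    obtain ⟨s, hs, hsi⟩ := (mem_vars_iff_mem_support i).1 (mem_vars_of_pderiv_ne_zero hne)
    exact ⟨s, hs, Finsupp.mem_support_iff.1 hsi⟩
  obtain ⟨i₀, hi₀⟩ := exists_lt_of_sum_eq_zero hsum hnontriv hmax
  obtain ⟨a, ha⟩ := hmono.exists_lt_iff_lt M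
  have hM (j : Fin (m + 1)) : lam j = M ↔ a ≤ j := by
    rw [← not_lt, ha, (hmax j).lt_iff_ne, not_not]
  obtain ⟨s₀, hs₀, hs₀i⟩ := hvar i₀
  obtain ⟨s₁, hs₁, hs₁i⟩ := hvar (Fin.last m)
  obtain ⟨g₁, g₂, hg₁, hg₂, hfg, hsupp₁, hsupp₂⟩ :=
    exists_eq_add_of_exists_mem_support f (fun s => ∀ j : Fin (m + 1), (j : ℕ) < a → s j = 0)
      ⟨s₀, hs₀, fun h => hs₀i (h i₀ ((ha i₀).2 hi₀))⟩
      ⟨s₁, hs₁, fun j hj => by_contra fun hsj => not_lt.2 ((hM j).1 (hpure hs₁ rfl hs₁i hsj)) hj⟩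
  refine ⟨a, ?_, ?_, g₁, g₂, hg₁, hg₂, hfg, fun s hs j hj => ?_, hsupp₂⟩
  · exact (Nat.zero_le _).trans_lt ((ha i₀).2 hi₀)
  · exact Nat.lt_succ_of_le ((hM (Fin.last m)).1 rfl)
  · obtain ⟨hs, hmixed⟩ := hsupp₁ s hs
    by_contra hsj
    exact hmixed fun k hk => by_contra fun hsk =>
      not_lt.2 ((hM k).1 (hpure hs ((hM j).2 hj) hsj hsk)) hk
end
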